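/- arXiv:1402.0130 — 2 statements merged into one kernel-verified Lean document; each statement's English description precedes it below -/
import Mathlib

section
/- Case 3 equilibria (Proposition on equilibria, case 3): if θ₁ − h₁ < k₁/γ₁ < θ₁ + h₁ and 0 < k₂/γ₂ < θ₂ + h₂, then the set of points z ∈ C with F(z) = 0 is exactly {z₁*, z₂*}, where z₁* = (k₁/γ₁, k₂/γ₂, 1, 0) and z₂* = (k₁/γ₁, 0, 0, 0). -/
/-!
Each zero of `F` pins the concentrations to the mode: `x₁ = k₁ (1 - q₂) / γ₁` and
`x₂ = k₂ q₁ / γ₂`. If gene 2 is on (`q₂ = 1`) then `x₁ = 0`, which lies below the threshold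
`θ₁ - h₁` under which gene 1 cannot stay on, so gene 1 is off, hence `x₂ = 0` lies below the
threshold `θ₂ - h₂` under which gene 2 cannot stay on: no equilibrium. If gene 2 is off, both
modes of gene 1 give an equilibrium, and the hypotheses on `k₁ / γ₁` and `k₂ / γ₂` say precisely
that these two points satisfy the hysteresis constraints of their modes.
-/

open Set

/-- The switching function `η` of a gene with threshold `θ` and hysteresis half-width `h`. -/
def hysteresisSwitch (θ h x q : ℝ) : ℝ := (2 * q - 1) * (-x + θ + (1 - 2 * q) * h)

section HysteresisSwitch

variable {θ h x : ℝ}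

theorem hysteresisSwitch_zero_nonpos_iff : hysteresisSwitch θ h x 0 ≤ 0 ↔ x ≤ θ + h := by
  unfold hysteresisSwitch
  constructor <;> intro <;> linarith

theorem hysteresisSwitch_one_nonpos_iff : hysteresisSwitch θ h x 1 ≤ 0 ↔ θ - h ≤ x := by
  unfold hysteresisSwitch
  constructor <;> intro <;> linarith

end HysteresisSwitch

section TwoGeneSystem

variable (k₁ k₂ γ₁ γ₂ θ₁ θ₂ h₁ h₂ : ℝ)

def twoGeneFlowSet : Set (ℝ × ℝ × ℝ × ℝ) :=
  {z | 0 ≤ z.1 ∧ 0 ≤ z.2.1 ∧ (z.2.2.1 = 0 ∨ z.2.2.1 = 1) ∧ (z.2.2.2 = 0 ∨ z.2.2.2 = 1) ∧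
    hysteresisSwitch θ₁ h₁ z.1 z.2.2.1 ≤ 0 ∧ hysteresisSwitch θ₂ h₂ z.2.1 z.2.2.2 ≤ 0}

def twoGeneFlowMap (z : ℝ × ℝ × ℝ × ℝ) : ℝ × ℝ × ℝ × ℝ :=
  (k₁ * (1 - z.2.2.2) - γ₁ * z.1, k₂ * z.2.2.1 - γ₂ * z.2.1, 0, 0)

variable {k₁ k₂ γ₁ γ₂ θ₁ θ₂ h₁ h₂}

theorem twoGeneFlowMap_eq_zero_iff (hγ₁ : γ₁ ≠ 0) (hγ₂ : γ₂ ≠ 0) {x₁ x₂ q₁ q₂ : ℝ} :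
    twoGeneFlowMap k₁ k₂ γ₁ γ₂ (x₁, x₂, q₁, q₂) = 0 ↔
      x₁ = k₁ * (1 - q₂) / γ₁ ∧ x₂ = k₂ * q₁ / γ₂ := by
  simp only [twoGeneFlowMap, Prod.mk_eq_zero, and_true, eq_div_iff hγ₁, eq_div_iff hγ₂]
  constructor <;> rintro ⟨hx₁, hx₂⟩ <;> constructor <;> linarith

theorem notMem_twoGeneFlowSet_of_gene₂_on (hθh₁ : 0 < θ₁ - h₁) (hθh₂ : 0 < θ₂ - h₂)
    {q₁ : ℝ} (hq₁ : q₁ = 0 ∨ q₁ = 1) :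
    (0, k₂ * q₁ / γ₂, q₁, 1) ∉ twoGeneFlowSet θ₁ θ₂ h₁ h₂ := by
  rintro ⟨-, -, -, -, hη₁, hη₂⟩
  rcases hq₁ with rfl | rfl
  · simp only [mul_zero, zero_div, hysteresisSwitch_one_nonpos_iff] at hη₂
    linarith
  · rw [hysteresisSwitch_one_nonpos_iff] at hη₁
    linarith

theorem twoGene_equilibria_eq_pair (hγ₁ : γ₁ ≠ 0) (hγ₂ : γ₂ ≠ 0)
    (hθh₁ : 0 < θ₁ - h₁) (hθh₂ : 0 < θ₂ - h₂)
    (hc1 : θ₁ - h₁ < k₁ / γ₁) (hc2 : k₁ / γ₁ < θ₁ + h₁)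
    (hc3 : 0 < k₂ / γ₂) (hc4 : k₂ / γ₂ < θ₂ + h₂) :
    {z ∈ twoGeneFlowSet θ₁ θ₂ h₁ h₂ | twoGeneFlowMap k₁ k₂ γ₁ γ₂ z = 0} =
      {(k₁ / γ₁, k₂ / γ₂, 1, 0), (k₁ / γ₁, 0, 0, 0)} := by
  ext ⟨x₁, x₂, q₁, q₂⟩
  simp only [mem_sep_iff, twoGeneFlowMap_eq_zero_iff hγ₁ hγ₂, mem_insert_iff,
    mem_singleton_iff, Prod.mk.injEq]
  constructor
  · rintro ⟨hz, rfl, rfl⟩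
    obtain rfl : q₂ = 0 := hz.2.2.2.1.resolve_right fun hq₂ ↦ by
      subst hq₂
      exact notMem_twoGeneFlowSet_of_gene₂_on (k₂ := k₂) (γ₂ := γ₂) hθh₁ hθh₂ hz.2.2.1
        (by simpa using hz)
    rcases hz.2.2.1 with rfl | rfl <;> simp
  · have hx₁ : 0 ≤ k₁ / γ₁ := by linarith
    rintro (⟨rfl, rfl, rfl, rfl⟩ | ⟨rfl, rfl, rfl, rfl⟩)
    · refine ⟨⟨hx₁, hc3.le, .inr rfl, .inl rfl, hysteresisSwitch_one_nonpos_iff.2 hc1.le,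
        hysteresisSwitch_zero_nonpos_iff.2 hc4.le⟩, by simp, by simp⟩
    · refine ⟨⟨hx₁, le_rfl, .inl rfl, .inl rfl, hysteresisSwitch_zero_nonpos_iff.2 hc2.le,
        hysteresisSwitch_zero_nonpos_iff.2 (by linarith)⟩, by simp, by simp⟩

end TwoGeneSystem

theorem case3_equilibria_general
    (k₁ k₂ γ₁ γ₂ θ₁ θ₂ h₁ h₂ : ℝ)
    (hγ₁ : 0 < γ₁) (hγ₂ : 0 < γ₂)
    (hθh₁ : 0 < θ₁ - h₁) (hθh₂ : 0 < θ₂ - h₂)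
    (η₁ η₂ : ℝ → ℝ → ℝ)
    (hη₁ : ∀ x q, η₁ x q = (2 * q - 1) * (-x + θ₁ + (1 - 2 * q) * h₁))
    (hη₂ : ∀ x q, η₂ x q = (2 * q - 1) * (-x + θ₂ + (1 - 2 * q) * h₂))
    (C : Set (ℝ × ℝ × ℝ × ℝ))
    (hC : C = {z : ℝ × ℝ × ℝ × ℝ |
      0 ≤ z.1 ∧ 0 ≤ z.2.1 ∧ (z.2.2.1 = 0 ∨ z.2.2.1 = 1) ∧ (z.2.2.2 = 0 ∨ z.2.2.2 = 1) ∧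
      η₁ z.1 z.2.2.1 ≤ 0 ∧ η₂ z.2.1 z.2.2.2 ≤ 0})
    (F : (ℝ × ℝ × ℝ × ℝ) → (ℝ × ℝ × ℝ × ℝ))
    (hF : ∀ z : ℝ × ℝ × ℝ × ℝ,
      F z = (k₁ * (1 - z.2.2.2) - γ₁ * z.1, k₂ * z.2.2.1 - γ₂ * z.2.1, 0, 0))
    (hc1 : θ₁ - h₁ < k₁ / γ₁) (hc2 : k₁ / γ₁ < θ₁ + h₁)
    (hc3 : 0 < k₂ / γ₂) (hc4 : k₂ / γ₂ < θ₂ + h₂) :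
    {z ∈ C | F z = 0} =
      {((k₁ / γ₁, k₂ / γ₂, 1, 0) : ℝ × ℝ × ℝ × ℝ),
       ((k₁ / γ₁, 0, 0, 0) : ℝ × ℝ × ℝ × ℝ)} := by
  obtain rfl : η₁ = hysteresisSwitch θ₁ h₁ := funext₂ hη₁
  obtain rfl : η₂ = hysteresisSwitch θ₂ h₂ := funext₂ hη₂
  obtain rfl : F = twoGeneFlowMap k₁ k₂ γ₁ γ₂ := funext hF
  subst hC
  exact twoGene_equilibria_eq_pair hγ₁.ne' hγ₂.ne' hθh₁ hθh₂ hc1 hc2 hc3 hc4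

/-- Case 3 equilibria: if θ₁ - h₁ < k₁/γ₁ < θ₁ + h₁ and 0 < k₂/γ₂ < θ₂ + h₂, then
the zeros of F in the flow set C are exactly z₁* = (k₁/γ₁, k₂/γ₂, 1, 0) and
z₂* = (k₁/γ₁, 0, 0, 0). -/
theorem case3_equilibria
    (k₁ k₂ γ₁ γ₂ θ₁ θ₂ h₁ h₂ : ℝ)
    (hk₁ : 0 < k₁) (hk₂ : 0 < k₂) (hγ₁ : 0 < γ₁) (hγ₂ : 0 < γ₂)
    (hθ₁ : 0 < θ₁) (hθ₂ : 0 < θ₂) (hh₁ : 0 < h₁) (hh₂ : 0 < h₂)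
    (hθh₁ : 0 < θ₁ - h₁) (hθh₂ : 0 < θ₂ - h₂)
    (η₁ η₂ : ℝ → ℝ → ℝ)
    (hη₁ : ∀ x q, η₁ x q = (2 * q - 1) * (-x + θ₁ + (1 - 2 * q) * h₁))
    (hη₂ : ∀ x q, η₂ x q = (2 * q - 1) * (-x + θ₂ + (1 - 2 * q) * h₂))
    (C : Set (ℝ × ℝ × ℝ × ℝ))
    (hC : C = {z : ℝ × ℝ × ℝ × ℝ |
      0 ≤ z.1 ∧ 0 ≤ z.2.1 ∧ (z.2.2.1 = 0 ∨ z.2.2.1 = 1) ∧ (z.2.2.2 = 0 ∨ z.2.2.2 = 1) ∧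
      η₁ z.1 z.2.2.1 ≤ 0 ∧ η₂ z.2.1 z.2.2.2 ≤ 0})
    (F : (ℝ × ℝ × ℝ × ℝ) → (ℝ × ℝ × ℝ × ℝ))
    (hF : ∀ z : ℝ × ℝ × ℝ × ℝ,
      F z = (k₁ * (1 - z.2.2.2) - γ₁ * z.1, k₂ * z.2.2.1 - γ₂ * z.2.1, 0, 0))
    (hc1 : θ₁ - h₁ < k₁ / γ₁) (hc2 : k₁ / γ₁ < θ₁ + h₁)
    (hc3 : 0 < k₂ / γ₂) (hc4 : k₂ / γ₂ < θ₂ + h₂) :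
    {z ∈ C | F z = 0} =
      {((k₁ / γ₁, k₂ / γ₂, 1, 0) : ℝ × ℝ × ℝ × ℝ),
       ((k₁ / γ₁, 0, 0, 0) : ℝ × ℝ × ℝ × ℝ)} :=
  case3_equilibria_general k₁ k₂ γ₁ γ₂ θ₁ θ₂ h₁ h₂ hγ₁ hγ₂ hθh₁ hθh₂ η₁ η₂ hη₁ hη₂ C hC F hF hc1 hc2
    hc3 hc4
end

section
/- Case 4 equilibrium (Proposition on equilibria, case 4): if θ₁ − h₁ < k₁/γ₁ < θ₁ + h₁ and θ₂ + h₂ < k₂/γ₂, then the point z₂* = (k₁/γ₁, 0, 0, 0) belongs to the flow set C and satisfies F(z₂*) = 0, and it is the unique point z ∈ C with F(z) = 0. -/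
/-!
Both productions relax linearly to their rest points `x₁ = k₁ (1 - q₂) / γ₁` and
`x₂ = k₂ q₁ / γ₂`, so an equilibrium is determined by its modes `q₁, q₂`. If gene 2 were on,
`x₁` would rest at `0 < θ₁ - h₁`, forcing gene 1 off; then `x₂` rests at `0 < θ₂ - h₂`, forcing
gene 2 off. So gene 2 is off, and gene 1 cannot be on either, since then `x₂ = k₂ / γ₂` would
exceed the threshold `θ₂ + h₂` below which gene 2 may stay off.
-/

def hysteresis (θ h x q : ℝ) : ℝ := (2 * q - 1) * (-x + θ + (1 - 2 * q) * h)

section Hysteresis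

variable {θ h x q : ℝ}

theorem hysteresis_zero_nonpos_iff : hysteresis θ h x 0 ≤ 0 ↔ x ≤ θ + h := by
  unfold hysteresis
  constructor <;> intro H <;> linarith

theorem hysteresis_one_nonpos_iff : hysteresis θ h x 1 ≤ 0 ↔ θ - h ≤ x := by
  unfold hysteresis
  constructor <;> intro H <;> linarith

theorem eq_zero_of_hysteresis_nonpos (hq : q = 0 ∨ q = 1) (he : hysteresis θ h x q ≤ 0)
    (hx : x < θ - h) : q = 0 := by
  rcases hq with hq | rfl
  · exact hq
  · exact absurd (hysteresis_one_nonpos_iff.1 he) hx.not_ge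

theorem eq_one_of_hysteresis_nonpos (hq : q = 0 ∨ q = 1) (he : hysteresis θ h x q ≤ 0)
    (hx : θ + h < x) : q = 1 := by
  rcases hq with rfl | hq
  · exact absurd (hysteresis_zero_nonpos_iff.1 he) hx.not_ge
  · exact hq

end Hysteresis

theorem eq_div_of_sub_mul_eq_zero {u γ x : ℝ} (hγ : γ ≠ 0) (h : u - γ * x = 0) : x = u / γ :=
  eq_div_of_mul_eq hγ (by linarith)

theorem modes_eq_zero_of_equilibrium {k₁ k₂ γ₁ γ₂ θ₁ θ₂ h₁ h₂ q₁ q₂ : ℝ}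
    (hθh₁ : 0 < θ₁ - h₁) (hθh₂ : 0 < θ₂ - h₂) (hc : θ₂ + h₂ < k₂ / γ₂)
    (hq₁ : q₁ = 0 ∨ q₁ = 1) (hq₂ : q₂ = 0 ∨ q₂ = 1)
    (he₁ : hysteresis θ₁ h₁ (k₁ * (1 - q₂) / γ₁) q₁ ≤ 0)
    (he₂ : hysteresis θ₂ h₂ (k₂ * q₁ / γ₂) q₂ ≤ 0) :
    q₁ = 0 ∧ q₂ = 0 := by
  have hq₂_zero : q₂ = 0 := by
    rcases hq₂ with hq₂ | rfl
    · exact hq₂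
    obtain rfl : q₁ = 0 := eq_zero_of_hysteresis_nonpos hq₁ he₁ (by simpa using hθh₁)
    simpa using eq_zero_of_hysteresis_nonpos (Or.inr rfl) he₂ (by simpa using hθh₂)
  subst hq₂_zero
  refine ⟨?_, rfl⟩
  rcases hq₁ with hq₁ | rfl
  · exact hq₁
  simpa using eq_one_of_hysteresis_nonpos (Or.inl rfl) he₂ (by simpa using hc)

theorem case4_equilibrium_general
    (k₁ k₂ γ₁ γ₂ θ₁ θ₂ h₁ h₂ : ℝ)
    (hk₁ : 0 < k₁) (hγ₁ : 0 < γ₁) (hγ₂ : 0 < γ₂)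
    (hθ₂ : 0 < θ₂) (hh₂ : 0 < h₂)
    (hθh₁ : 0 < θ₁ - h₁) (hθh₂ : 0 < θ₂ - h₂)
    (η₁ η₂ : ℝ → ℝ → ℝ)
    (hη₁ : ∀ x q, η₁ x q = (2 * q - 1) * (-x + θ₁ + (1 - 2 * q) * h₁))
    (hη₂ : ∀ x q, η₂ x q = (2 * q - 1) * (-x + θ₂ + (1 - 2 * q) * h₂))
    (C : Set (ℝ × ℝ × ℝ × ℝ))
    (hC : C = {z : ℝ × ℝ × ℝ × ℝ |
      0 ≤ z.1 ∧ 0 ≤ z.2.1 ∧ (z.2.2.1 = 0 ∨ z.2.2.1 = 1) ∧ (z.2.2.2 = 0 ∨ z.2.2.2 = 1) ∧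
      η₁ z.1 z.2.2.1 ≤ 0 ∧ η₂ z.2.1 z.2.2.2 ≤ 0})
    (F : (ℝ × ℝ × ℝ × ℝ) → (ℝ × ℝ × ℝ × ℝ))
    (hF : ∀ z : ℝ × ℝ × ℝ × ℝ,
      F z = (k₁ * (1 - z.2.2.2) - γ₁ * z.1, k₂ * z.2.2.1 - γ₂ * z.2.1, 0, 0))
    (hc2 : k₁ / γ₁ < θ₁ + h₁) (hc3 : θ₂ + h₂ < k₂ / γ₂) :
    ((k₁ / γ₁, 0, 0, 0) : ℝ × ℝ × ℝ × ℝ) ∈ C ∧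
    F (k₁ / γ₁, 0, 0, 0) = 0 ∧
    ∀ z ∈ C, F z = 0 → z = ((k₁ / γ₁, 0, 0, 0) : ℝ × ℝ × ℝ × ℝ) := by
  obtain rfl : η₁ = hysteresis θ₁ h₁ := funext₂ hη₁
  obtain rfl : η₂ = hysteresis θ₂ h₂ := funext₂ hη₂
  obtain rfl : F = _ := funext hF
  subst hC
  refine ⟨⟨by positivity, le_rfl, Or.inl rfl, Or.inl rfl, hysteresis_zero_nonpos_iff.2 hc2.le,
    hysteresis_zero_nonpos_iff.2 (add_pos hθ₂ hh₂).le⟩, ?_, ?_⟩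
  · simp [mul_div_cancel₀ _ hγ₁.ne']
  rintro ⟨x₁, x₂, q₁, q₂⟩ ⟨-, -, hq₁, hq₂, he₁, he₂⟩ hFz
  dsimp only at hq₁ hq₂ he₁ he₂ hFz
  obtain ⟨hf₁, hf₂⟩ := Prod.mk_eq_zero.1 hFz
  obtain rfl := eq_div_of_sub_mul_eq_zero hγ₁.ne' hf₁
  obtain rfl := eq_div_of_sub_mul_eq_zero hγ₂.ne' (Prod.mk_eq_zero.1 hf₂).1
  obtain ⟨rfl, rfl⟩ := modes_eq_zero_of_equilibrium hθh₁ hθh₂ hc3 hq₁ hq₂ he₁ he₂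
  simp

/-- Case 4 equilibrium: if θ₁ - h₁ < k₁/γ₁ < θ₁ + h₁ and θ₂ + h₂ < k₂/γ₂, then
z₂* = (k₁/γ₁, 0, 0, 0) is the unique zero of F in the flow set C. -/
theorem case4_equilibrium
    (k₁ k₂ γ₁ γ₂ θ₁ θ₂ h₁ h₂ : ℝ)
    (hk₁ : 0 < k₁) (hk₂ : 0 < k₂) (hγ₁ : 0 < γ₁) (hγ₂ : 0 < γ₂)
    (hθ₁ : 0 < θ₁) (hθ₂ : 0 < θ₂) (hh₁ : 0 < h₁) (hh₂ : 0 < h₂)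
    (hθh₁ : 0 < θ₁ - h₁) (hθh₂ : 0 < θ₂ - h₂)
    (η₁ η₂ : ℝ → ℝ → ℝ)
    (hη₁ : ∀ x q, η₁ x q = (2 * q - 1) * (-x + θ₁ + (1 - 2 * q) * h₁))
    (hη₂ : ∀ x q, η₂ x q = (2 * q - 1) * (-x + θ₂ + (1 - 2 * q) * h₂))
    (C : Set (ℝ × ℝ × ℝ × ℝ))
    (hC : C = {z : ℝ × ℝ × ℝ × ℝ |
      0 ≤ z.1 ∧ 0 ≤ z.2.1 ∧ (z.2.2.1 = 0 ∨ z.2.2.1 = 1) ∧ (z.2.2.2 = 0 ∨ z.2.2.2 = 1) ∧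
      η₁ z.1 z.2.2.1 ≤ 0 ∧ η₂ z.2.1 z.2.2.2 ≤ 0})
    (F : (ℝ × ℝ × ℝ × ℝ) → (ℝ × ℝ × ℝ × ℝ))
    (hF : ∀ z : ℝ × ℝ × ℝ × ℝ,
      F z = (k₁ * (1 - z.2.2.2) - γ₁ * z.1, k₂ * z.2.2.1 - γ₂ * z.2.1, 0, 0))
    (hc1 : θ₁ - h₁ < k₁ / γ₁) (hc2 : k₁ / γ₁ < θ₁ + h₁) (hc3 : θ₂ + h₂ < k₂ / γ₂) :
    ((k₁ / γ₁, 0, 0, 0) : ℝ × ℝ × ℝ × ℝ) ∈ C ∧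
    F (k₁ / γ₁, 0, 0, 0) = 0 ∧
    ∀ z ∈ C, F z = 0 → z = ((k₁ / γ₁, 0, 0, 0) : ℝ × ℝ × ℝ × ℝ) :=
  case4_equilibrium_general k₁ k₂ γ₁ γ₂ θ₁ θ₂ h₁ h₂ hk₁ hγ₁ hγ₂ hθ₂ hh₂ hθh₁ hθh₂ η₁ η₂ hη₁ hη₂ C hC
    F hF hc2 hc3
end
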